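/- Fix 0 < t₁ < t₂ and suppose a sphere in ℝ³ with centre p and radius r is tangent to the moment curve γ(t) = (t,t²,t³) at γ(t₁) and γ(t₂), i.e. t₁ and t₂ are double roots of g(t) = ‖γ(t) − p‖² − r². Then for every t > 0 with t ≠ t₁ and t ≠ t₂, the point γ(t) lies strictly outside the sphere. -/

import Mathlib

/-- The moment curve in ℝ³. -/
noncomputable def gamma3 (t : ℝ) : EuclideanSpace ℝ (Fin 3) :=
  WithLp.toLp 2 ![t, t^2, t^3]

lemma gamma3_norm_sq (p : EuclideanSpace ℝ (Fin 3)) (t : ℝ) :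
    ‖gamma3 t - p‖ ^ 2 = (t - p 0)^2 + (t^2 - p 1)^2 + (t^3 - p 2)^2 := by
  rw [EuclideanSpace.norm_eq (gamma3 t - p), Real.sq_sqrt (by positivity)]
  simp [Fin.sum_univ_three, gamma3, PiLp.sub_apply, Real.norm_eq_abs, sq_abs]

lemma gamma3_deriv (p : EuclideanSpace ℝ (Fin 3)) (r t₀ : ℝ) :
    deriv (fun t => ‖gamma3 t - p‖^2 - r^2) t₀ =
      2*(t₀ - p 0) + 4*t₀*(t₀^2 - p 1) + 6*t₀^2*(t₀^3 - p 2) := by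
  have hfun : (fun t => ‖gamma3 t - p‖^2 - r^2)
      = fun t => (t - p 0)^2 + (t^2 - p 1)^2 + (t^3 - p 2)^2 - r^2 := by
    funext t; rw [gamma3_norm_sq]
  rw [hfun]
  have h1 : HasDerivAt (fun t : ℝ => (t - p 0)^2) (2*(t₀ - p 0)) t₀ := by
    simpa using (((hasDerivAt_id t₀).sub_const (p 0)).fun_pow 2)
  have h2 : HasDerivAt (fun t : ℝ => (t^2 - p 1)^2) (4*t₀*(t₀^2 - p 1)) t₀ := by
    have := (((hasDerivAt_pow 2 t₀).sub_const (p 1)).fun_pow 2)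
    refine this.congr_deriv ?_; norm_num; ring
  have h3 : HasDerivAt (fun t : ℝ => (t^3 - p 2)^2) (6*t₀^2*(t₀^3 - p 2)) t₀ := by
    have := (((hasDerivAt_pow 3 t₀).sub_const (p 2)).fun_pow 2)
    refine this.congr_deriv ?_; norm_num; ring
  exact (((h1.add h2).add h3).sub_const (r^2)).deriv

/-- if a sphere in ℝ³ is tangent to the moment curve at `γ(t₁)`
and `γ(t₂)` (with `0 < t₁ < t₂`), then for every `t > 0` with `t ≠ t₁, t₂` the
point `γ(t)` lies strictly outside the sphere. -/
theorem stmt8 (t₁ t₂ : ℝ) (h0 : 0 < t₁) (h12 : t₁ < t₂)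
    (p : EuclideanSpace ℝ (Fin 3)) (r : ℝ) (hr : 0 < r)
    (h1 : ‖gamma3 t₁ - p‖^2 - r^2 = 0)
    (h2 : ‖gamma3 t₂ - p‖^2 - r^2 = 0)
    (h1' : deriv (fun t => ‖gamma3 t - p‖^2 - r^2) t₁ = 0)
    (h2' : deriv (fun t => ‖gamma3 t - p‖^2 - r^2) t₂ = 0) :
    ∀ t : ℝ, 0 < t → t ≠ t₁ → t ≠ t₂ → r < ‖gamma3 t - p‖ := by
  intro t ht ht1 ht2
  set a := p 0; set b := p 1; set c := p 2
  rw [gamma3_norm_sq] at h1 h2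
  rw [gamma3_deriv] at h1' h2'
  have hd : t₁ - t₂ ≠ 0 := by linarith
  -- key factorization identity
  have key : (t - a)^2 + (t^2 - b)^2 + (t^3 - c)^2 - r^2
      = (t - t₁)^2 * (t - t₂)^2 * (t^2 + 2*(t₁+t₂)*t + (1 + 3*t₁^2 + 4*t₁*t₂ + 3*t₂^2)) := by
    have H : (t₁ - t₂)^4 * (((t - a)^2 + (t^2 - b)^2 + (t^3 - c)^2 - r^2)
        - (t - t₁)^2 * (t - t₂)^2 * (t^2 + 2*(t₁+t₂)*t + (1 + 3*t₁^2 + 4*t₁*t₂ + 3*t₂^2))) = 0 := by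
      linear_combination ((t₂-t₁+2*(t-t₁))*(t-t₂)^2*(t₂-t₁)) * h1
        + ((t₁-t₂+2*(t-t₂))*(t-t₁)^2*(t₁-t₂)) * h2
        + ((t-t₁)*(t-t₂)^2*(t₁-t₂)^2) * h1'
        + ((t-t₂)*(t-t₁)^2*(t₁-t₂)^2) * h2'
    have h4 : (t₁ - t₂)^4 ≠ 0 := pow_ne_zero _ hd
    have := mul_eq_zero.mp H
    rcases this with h | h
    · exact absurd h h4
    · linarith
  have hq : 0 < t^2 + 2*(t₁+t₂)*t + (1 + 3*t₁^2 + 4*t₁*t₂ + 3*t₂^2) := by nlinarith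
  have h1ne : t - t₁ ≠ 0 := sub_ne_zero.mpr ht1
  have h2ne : t - t₂ ≠ 0 := sub_ne_zero.mpr ht2
  have hpos : 0 < (t - t₁)^2 * (t - t₂)^2 *
      (t^2 + 2*(t₁+t₂)*t + (1 + 3*t₁^2 + 4*t₁*t₂ + 3*t₂^2)) := by positivity
  have hgt : r^2 < ‖gamma3 t - p‖^2 := by
    rw [gamma3_norm_sq]; nlinarith [key]
  exact lt_of_pow_lt_pow_left₀ 2 (norm_nonneg _) hgt
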